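/- Let Ω ⊆ ℝ^{n+1} contain (0,…,0,1), suppose 0 ∉ Ω, and suppose the closure 𝓘(Ω) is full-dimensional. Then for any extreme ray r of cl cone(Ω), either some positive scalar multiple of r belongs to Ω, or there exists a sequence of pairwise distinct points r^i ∈ Ω that conically converges to r. -/

import Mathlib

noncomputable section

/-- The conical hull of a set: all finite nonnegative combinations of its elements. -/
def coneHull {E : Type*} [AddCommMonoid E] [Module ℝ E] (Ω : Set E) : Set E :=
  {y | ∃ (k : ℕ) (c : Fin k → ℝ) (v : Fin k → E),
    (∀ i, 0 ≤ c i) ∧ (∀ i, v i ∈ Ω) ∧ y = ∑ i, c i • v i}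

/-- The cutting-plane closure 𝓘(Ω) of a family Ω ⊆ ℝ^n × ℝ of inequalities. -/
def cutClosure {n : ℕ} (Ω : Set ((Fin n → ℝ) × ℝ)) : Set (Fin n → ℝ) :=
  {x | ∀ p ∈ Ω, ∑ i, p.1 i * x i ≤ p.2}

/-- `r` is an extreme ray of the convex cone `K`. -/
def IsExtremeRay {E : Type*} [AddCommMonoid E] [Module ℝ E] (K : Set E) (r : E) : Prop :=
  r ≠ 0 ∧ r ∈ K ∧ ∀ u v : E, u ∈ K → v ∈ K → r = u + v →
    (∃ c : ℝ, 0 ≤ c ∧ u = c • r) ∧ (∃ c : ℝ, 0 ≤ c ∧ v = c • r)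

/-!
An interior point `x₀` of `𝓘(Ω)` yields a continuous linear functional `φ`, a positive multiple
of `(α, β) ↦ β - α ⬝ x₀`, with `‖p‖ ≤ φ p` on `Ω` and hence on `K = cl cone(Ω)`. Normalised by
`φ`, the extreme ray `r` becomes an extreme point of the slice `K ∩ {φ = 1}` that lies in the
closed convex hull of the bounded set `{p / φ p | p ∈ Ω}` (itself inside the slice), so it is an
extreme point of that hull. In finite dimensions the convex hull of a compact set is compact
(Carathéodory), so extreme points of the closed convex hull of a bounded set lie in the closure
of the set (Milman). Thus `r / φ r` is a normalised point of `Ω` or a limit of pairwise distinct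
ones.
-/

open Set Filter Topology Module

section ConvexCone

variable {E : Type*} [AddCommGroup E] [Module ℝ E] {Ω : Set E}

lemma coneHull_eq_hull : coneHull Ω = (PointedCone.hull ℝ Ω : Set E) := by
  ext y
  rw [SetLike.mem_coe, PointedCone.hull, Submodule.mem_span_set']
  constructor
  · rintro ⟨k, c, v, hc, hv, rfl⟩
    exact ⟨k, fun i => ⟨c i, hc i⟩, fun i => ⟨v i, hv i⟩, rfl⟩
  · rintro ⟨k, c, v, rfl⟩
    exact ⟨k, fun i => c i, fun i => v i, fun i => (c i).2, fun i => (v i).2, rfl⟩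

lemma closure_coneHull_eq [TopologicalSpace E] [ContinuousAdd E] [ContinuousSMul ℝ E] :
    closure (coneHull Ω) = ((PointedCone.hull ℝ Ω).closure : Set E) := by
  rw [coneHull_eq_hull, PointedCone.coe_closure]

lemma mem_convexHull_range_iff {ι : Type*} [Fintype ι] {z : ι → E} {x : E} :
    x ∈ convexHull ℝ (range z) ↔ ∃ w ∈ stdSimplex ℝ ι, ∑ i, w i • z i = x := by
  classical
  have hz : range z = Fintype.linearCombination ℝ z '' range fun i => Pi.single i 1 := by
    rw [← Set.range_comp]; congr; ext i; simp
  rw [hz, ← LinearMap.image_convexHull, convexHull_rangle_single_eq_stdSimplex]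
  rfl

lemma inv_smul_mem_convexHull_of_mem_coneHull {φ : E →ₗ[ℝ] ℝ} (hφ : ∀ p ∈ Ω, 0 < φ p) {y : E}
    (hy : y ∈ coneHull Ω) (hφy : 0 < φ y) :
    (φ y)⁻¹ • y ∈ convexHull ℝ ((fun p => (φ p)⁻¹ • p) '' Ω) := by
  obtain ⟨k, c, v, hc, hv, rfl⟩ := hy
  have hφsum : φ (∑ i, c i • v i) = ∑ i, c i * φ (v i) := by simp
  have hcm : (φ (∑ i, c i • v i))⁻¹ • ∑ i, c i • v i =
      Finset.univ.centerMass (fun i => c i * φ (v i)) (fun i => (φ (v i))⁻¹ • v i) := by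
    rw [Finset.centerMass, ← hφsum]
    congr 1
    refine Finset.sum_congr rfl fun i _ => ?_
    rw [smul_smul, mul_assoc, mul_inv_cancel₀ (hφ _ (hv i)).ne', mul_one]
  rw [hcm]
  exact Finset.univ.centerMass_mem_convexHull (fun i _ => mul_nonneg (hc i) (hφ _ (hv i)).le)
    (hφsum ▸ hφy) fun i _ => mem_image_of_mem _ (hv i)

lemma IsExtremeRay.inv_smul_mem_extremePoints {C : PointedCone ℝ E} {φ : E →ₗ[ℝ] ℝ} {r : E}
    (hr : IsExtremeRay (C : Set E) r) (hφr : 0 < φ r) :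
    (φ r)⁻¹ • r ∈ ((C : Set E) ∩ {x | φ x = 1}).extremePoints ℝ := by
  obtain ⟨-, hrC, hext⟩ := hr
  refine mem_extremePoints_iff_left.mpr ⟨⟨C.smul_mem (inv_nonneg.mpr hφr.le) hrC, ?_⟩, ?_⟩
  · simp [hφr.ne']
  rintro x₁ ⟨hx₁C, hφx₁ : φ x₁ = 1⟩ x₂ ⟨hx₂C, -⟩ ⟨a, b, ha, hb, hab, hx⟩
  have hsplit : r = (φ r * a) • x₁ + (φ r * b) • x₂ := by
    rw [mul_smul, mul_smul, ← smul_add, hx, smul_inv_smul₀ hφr.ne']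
  obtain ⟨⟨c, -, hc⟩, -⟩ := hext _ _ (C.smul_mem (by positivity) hx₁C)
    (C.smul_mem (by positivity) hx₂C) hsplit
  have hca : c = a :=
    mul_right_cancel₀ hφr.ne' (by simpa [hφx₁, mul_comm] using (congrArg φ hc).symm)
  refine smul_right_injective E (by positivity : φ r * a ≠ 0) ?_
  change (φ r * a) • x₁ = (φ r * a) • ((φ r)⁻¹ • r)
  rw [hc, hca, smul_smul, mul_comm (φ r) a, mul_assoc, mul_inv_cancel₀ hφr.ne', mul_one]

end ConvexCone

section FiniteDimensional

variable {E : Type*} [NormedAddCommGroup E] [NormedSpace ℝ E] [FiniteDimensional ℝ E] {s : Set E}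

lemma exists_fin_sum_eq_of_mem_convexHull {x : E} (hx : x ∈ convexHull ℝ s) :
    ∃ w ∈ stdSimplex ℝ (Fin (finrank ℝ E + 1)), ∃ z : Fin (finrank ℝ E + 1) → E,
      (∀ i, z i ∈ s) ∧ ∑ i, w i • z i = x := by
  rw [convexHull_eq_union] at hx
  simp only [mem_iUnion] at hx
  obtain ⟨t, hts, hti, hxt⟩ := hx
  have hcard : Fintype.card t ≤ finrank ℝ E + 1 :=
    hti.card_le_finrank_succ.trans (Nat.succ_le_succ (Submodule.finrank_le _))
  have : Nonempty t := (convexHull_nonempty_iff.mp ⟨x, hxt⟩).to_subtype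
  let f : t ↪ Fin (finrank ℝ E + 1) := (Fintype.equivFin t).toEmbedding.trans (Fin.castLEEmb hcard)
  let z : Fin (finrank ℝ E + 1) → E := fun i => (Function.invFun f i : t)
  have hz : range z = t := by
    rw [← Subtype.range_coe (s := (t : Set E))]
    exact (Function.invFun_surjective f.injective).range_comp _
  rw [← hz, mem_convexHull_range_iff] at hxt
  obtain ⟨w, hw, hwx⟩ := hxt
  exact ⟨w, hw, z, fun i => hts (hz ▸ mem_range_self i), hwx⟩

lemma IsCompact.convexHull (hs : IsCompact s) : IsCompact (_root_.convexHull ℝ s) := by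
  have hsum : _root_.convexHull ℝ s =
      (fun wz : (Fin (finrank ℝ E + 1) → ℝ) × (Fin (finrank ℝ E + 1) → E) =>
        ∑ i, wz.1 i • wz.2 i) '' (stdSimplex ℝ _ ×ˢ univ.pi fun _ => s) := by
    refine Subset.antisymm (fun x hx => ?_) ?_
    · obtain ⟨w, hw, z, hz, rfl⟩ := exists_fin_sum_eq_of_mem_convexHull hx
      exact ⟨(w, z), ⟨hw, fun i _ => hz i⟩, rfl⟩
    · rintro _ ⟨⟨w, z⟩, ⟨hw, hz⟩, rfl⟩
      exact (convex_convexHull ℝ s).sum_mem (fun i _ => hw.1 i) hw.2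
        fun i _ => subset_convexHull ℝ s (hz i (mem_univ i))
  rw [hsum]
  exact ((isCompact_stdSimplex ℝ _).prod (isCompact_univ_pi fun _ => hs)).image (by fun_prop)

lemma extremePoints_closure_convexHull_subset (hs : Bornology.IsBounded s) :
    (closure (convexHull ℝ s)).extremePoints ℝ ⊆ closure s := by
  have hcpt : IsCompact (convexHull ℝ (closure s)) := hs.isCompact_closure.convexHull
  have hcl : closure (convexHull ℝ s) = convexHull ℝ (closure s) :=
    (closure_minimal (convexHull_mono subset_closure) hcpt.isClosed).antisymm
      (convexHull_min (closure_mono (subset_convexHull ℝ s)) (convex_convexHull ℝ s).closure)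
  rw [hcl]
  exact extremePoints_convexHull_subset

end FiniteDimensional

lemma Metric.exists_injective_tendsto_of_mem_closure_of_notMem {X : Type*} [MetricSpace X]
    {s : Set X} {e : X} (he : e ∈ closure s) (hes : e ∉ s) :
    ∃ q : ℕ → X, Function.Injective q ∧ (∀ k, q k ∈ s) ∧ Tendsto q atTop (𝓝 e) := by
  obtain ⟨q, hqs, hqe⟩ := mem_closure_iff_seq_limit.mp he
  have hdist : Tendsto (fun k => dist (q k) e) atTop (𝓝[>] 0) :=
    tendsto_nhdsWithin_iff.mpr ⟨tendsto_iff_dist_tendsto_zero.mp hqe,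
      Eventually.of_forall fun k => dist_pos.mpr (ne_of_mem_of_not_mem (hqs k) hes)⟩
  obtain ⟨g, hg, hmono⟩ := strictMono_subseq_of_tendsto_atTop (tendsto_inv_nhdsGT_zero.comp hdist)
  exact ⟨q ∘ g, .of_comp (f := fun x => (dist x e)⁻¹) hmono.injective, fun k => hqs (g k),
    hqe.comp hg.tendsto_atTop⟩

section CoerciveFunctional

variable {E : Type*} [NormedAddCommGroup E] [NormedSpace ℝ E] {Ω : Set E} {φ : E →L[ℝ] ℝ}

lemma pos_of_ne_zero_of_norm_le {x : E} (hx : x ≠ 0) (h : ‖x‖ ≤ φ x) : 0 < φ x :=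
  (norm_pos_iff.mpr hx).trans_le h

lemma norm_le_of_mem_closure_coneHull (hφ : ∀ p ∈ Ω, ‖p‖ ≤ φ p) {y : E}
    (hy : y ∈ closure (coneHull Ω)) : ‖y‖ ≤ φ y := by
  refine closure_minimal (fun y hy => ?_) (isClosed_le continuous_norm φ.continuous) hy
  rw [coneHull_eq_hull, SetLike.mem_coe] at hy
  induction hy using Submodule.span_induction with
  | mem x hx => exact hφ x hx
  | zero => simp
  | add x y _ _ hx hy => simpa using (norm_add_le x y).trans (add_le_add hx hy)
  | smul c x _ hx =>
    change ‖(c : ℝ) • x‖ ≤ φ ((c : ℝ) • x)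
    rw [norm_smul, map_smul, smul_eq_mul, Real.norm_of_nonneg c.2]
    exact mul_le_mul_of_nonneg_left hx c.2

lemma inv_smul_mem_closure_convexHull (hφ : ∀ p ∈ Ω, 0 < φ p) {y : E}
    (hy : y ∈ closure (coneHull Ω)) (hφy : 0 < φ y) :
    (φ y)⁻¹ • y ∈ closure (convexHull ℝ ((fun p => (φ p)⁻¹ • p) '' Ω)) := by
  obtain ⟨x, hx, hxy⟩ := mem_closure_iff_seq_limit.mp hy
  have hφx : Tendsto (fun k => φ (x k)) atTop (𝓝 (φ y)) := (φ.continuous.tendsto y).comp hxy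
  refine mem_closure_of_tendsto ((hφx.inv₀ hφy.ne').smul hxy) ?_
  filter_upwards [hφx.eventually_const_lt hφy] with k hk using
    inv_smul_mem_convexHull_of_mem_coneHull (φ := (φ : E →ₗ[ℝ] ℝ)) hφ (hx k) hk

variable [FiniteDimensional ℝ E]

lemma IsExtremeRay.inv_smul_mem_closure_image (hφ : ∀ p ∈ Ω, ‖p‖ ≤ φ p) (h0 : (0 : E) ∉ Ω)
    {r : E} (hr : IsExtremeRay (closure (coneHull Ω)) r) :
    (φ r)⁻¹ • r ∈ closure ((fun p => (φ p)⁻¹ • p) '' Ω) := by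
  set N := (fun p => (φ p)⁻¹ • p) '' Ω
  have hφΩ : ∀ p ∈ Ω, 0 < φ p := fun p hp =>
    pos_of_ne_zero_of_norm_le (ne_of_mem_of_not_mem hp h0) (hφ p hp)
  have hφr : 0 < φ r :=
    pos_of_ne_zero_of_norm_le hr.1 (norm_le_of_mem_closure_coneHull hφ hr.2.1)
  have hN : N ⊆ Metric.closedBall 0 1 := by
    rintro _ ⟨p, hp, rfl⟩
    rw [mem_closedBall_zero_iff, norm_smul, norm_inv, Real.norm_of_nonneg (hφΩ p hp).le]
    exact inv_mul_le_one_of_le₀ (hφ p hp) (hφΩ p hp).le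
  have hmem := inv_smul_mem_closure_convexHull hφΩ hr.2.1 hφr
  rw [closure_coneHull_eq] at hr
  have hNC : closure (convexHull ℝ N) ⊆
      ((PointedCone.hull ℝ Ω).closure : Set E) ∩ {x | φ x = 1} := by
    refine closure_minimal (convexHull_min ?_ ?_) ?_
    · rintro _ ⟨p, hp, rfl⟩
      exact ⟨subset_closure ((PointedCone.hull ℝ Ω).smul_mem (inv_nonneg.mpr (hφΩ p hp).le)
        (PointedCone.subset_hull hp)), by simp [(hφΩ p hp).ne']⟩
    · exact (PointedCone.convex _).inter (convex_hyperplane φ.isLinear 1)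
    · exact isClosed_closure.inter (isClosed_eq φ.continuous continuous_const)
  apply extremePoints_closure_convexHull_subset (Metric.isBounded_closedBall.subset hN)
  exact inter_extremePoints_subset_extremePoints_of_subset hNC
    ⟨hmem, hr.inv_smul_mem_extremePoints (φ := (φ : E →ₗ[ℝ] ℝ)) hφr⟩

lemma IsExtremeRay.exists_smul_mem_or_exists_injective_tendsto (hφ : ∀ p ∈ Ω, ‖p‖ ≤ φ p)
    (h0 : (0 : E) ∉ Ω) {r : E} (hr : IsExtremeRay (closure (coneHull Ω)) r) :
    (∃ c : ℝ, 0 < c ∧ c • r ∈ Ω) ∨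
      ∃ rs : ℕ → E, Function.Injective rs ∧ (∀ i, rs i ∈ Ω) ∧
        ∃ lam : ℕ → ℝ, (∀ i, 0 < lam i) ∧ Tendsto (fun i => lam i • rs i) atTop (𝓝 r) := by
  have hφΩ : ∀ p ∈ Ω, 0 < φ p := fun p hp =>
    pos_of_ne_zero_of_norm_le (ne_of_mem_of_not_mem hp h0) (hφ p hp)
  have hφr : 0 < φ r :=
    pos_of_ne_zero_of_norm_le hr.1 (norm_le_of_mem_closure_coneHull hφ hr.2.1)
  have he := hr.inv_smul_mem_closure_image hφ h0
  by_cases hN : (φ r)⁻¹ • r ∈ (fun p => (φ p)⁻¹ • p) '' Ω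
  · obtain ⟨v, hv, hve⟩ := hN
    refine .inl ⟨φ v / φ r, div_pos (hφΩ v hv) hφr, ?_⟩
    rwa [div_eq_mul_inv, mul_smul, ← hve, smul_inv_smul₀ (hφΩ v hv).ne']
  · obtain ⟨q, hq, hqN, hqe⟩ := Metric.exists_injective_tendsto_of_mem_closure_of_notMem he hN
    choose p hpΩ hpq using hqN
    refine .inr ⟨p, .of_comp (f := fun p => (φ p)⁻¹ • p) (by simpa [Function.comp_def, hpq]),
      hpΩ, fun k => φ r / φ (p k), fun k => div_pos hφr (hφΩ _ (hpΩ k)), ?_⟩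
    have hscale : ∀ k, (φ r / φ (p k)) • p k = φ r • q k := fun k => by
      rw [← hpq k, div_eq_mul_inv, mul_smul]
    simpa only [hscale, smul_inv_smul₀ hφr.ne'] using hqe.const_smul (φ r)

end CoerciveFunctional

lemma norm_prod_le_of_forall_mem_closedBall {E : Type*} [NormedAddCommGroup E] [NormedSpace ℝ E]
    {ℓ : StrongDual ℝ E} {β ε : ℝ} {x₀ : E} (hε : 0 < ε)
    (h : ∀ x ∈ Metric.closedBall x₀ ε, ℓ x ≤ β) :
    ‖(ℓ, β)‖ ≤ (1 + (1 + ‖x₀‖) / ε) * (β - ℓ x₀) := by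
  set ψ := β - ℓ x₀
  have hψ : 0 ≤ ψ := sub_nonneg.mpr (h x₀ (Metric.mem_closedBall_self hε.le))
  have hℓ : ‖ℓ‖ ≤ ψ / ε := by
    refine ContinuousLinearMap.opNorm_bound_of_ball_bound hε _ ℓ fun v hv => ?_
    rw [mem_closedBall_zero_iff] at hv
    have hadd := h (x₀ + v) (by simpa using hv)
    have hsub := h (x₀ - v) (by simpa using hv)
    rw [map_add] at hadd
    rw [map_sub] at hsub
    rw [Real.norm_eq_abs, abs_le]
    constructor <;> linarith
  have hβ : ‖β‖ ≤ ψ + ‖ℓ‖ * ‖x₀‖ := calc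
    ‖β‖ = ‖ψ + ℓ x₀‖ := by rw [sub_add_cancel]
    _ ≤ ‖ψ‖ + ‖ℓ x₀‖ := norm_add_le _ _
    _ ≤ ψ + ‖ℓ‖ * ‖x₀‖ := add_le_add (Real.norm_of_nonneg hψ).le (ℓ.le_opNorm x₀)
  have hℓx₀ : ‖ℓ‖ * ‖x₀‖ ≤ ψ / ε * ‖x₀‖ := mul_le_mul_of_nonneg_right hℓ (norm_nonneg _)
  have hexpand : (1 + (1 + ‖x₀‖) / ε) * ψ = ψ + ψ / ε + ψ / ε * ‖x₀‖ := by ring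
  have : 0 ≤ ψ / ε * ‖x₀‖ := by positivity
  rw [Prod.norm_def, hexpand]
  exact max_le (by linarith [div_nonneg hψ hε.le]) (by linarith [div_nonneg hψ hε.le])

lemma exists_norm_le_of_mem_interior_cutClosure {n : ℕ} {Ω : Set ((Fin n → ℝ) × ℝ)}
    {x₀ : Fin n → ℝ} (hx₀ : x₀ ∈ interior (cutClosure Ω)) :
    ∃ φ : ((Fin n → ℝ) × ℝ) →L[ℝ] ℝ, ∀ p ∈ Ω, ‖p‖ ≤ φ p := by
  obtain ⟨ε, hε, hball⟩ :=
    Metric.nhds_basis_closedBall.mem_iff.mp (mem_interior_iff_mem_nhds.mp hx₀)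
  let dot (α : Fin n → ℝ) : StrongDual ℝ (Fin n → ℝ) := ∑ i, α i • ContinuousLinearMap.proj i
  have hdot (α x : Fin n → ℝ) : dot α x = ∑ i, α i * x i := by simp [dot]
  have hnorm (α : Fin n → ℝ) : ‖α‖ ≤ ‖dot α‖ := by
    refine pi_norm_le_iff_of_nonneg (norm_nonneg _) |>.mpr fun i => ?_
    calc ‖α i‖ = ‖dot α (Pi.single i 1)‖ := by simp [hdot, Pi.single_apply]
      _ ≤ ‖dot α‖ * ‖(Pi.single i 1 : Fin n → ℝ)‖ := (dot α).le_opNorm _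
      _ = ‖dot α‖ := by rw [Pi.norm_single, norm_one, mul_one]
  refine ⟨(1 + (1 + ‖x₀‖) / ε) • (ContinuousLinearMap.snd ℝ _ ℝ -
    ∑ i, x₀ i • (ContinuousLinearMap.proj i).comp (ContinuousLinearMap.fst ℝ _ ℝ)), fun p hp => ?_⟩
  have hp : ∀ x ∈ Metric.closedBall x₀ ε, dot p.1 x ≤ p.2 := fun x hx => hdot p.1 x ▸ hball hx p hp
  calc ‖p‖ ≤ ‖(dot p.1, p.2)‖ := by
        rw [Prod.norm_def, Prod.norm_def]; exact max_le_max (hnorm p.1) le_rfl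
    _ ≤ (1 + (1 + ‖x₀‖) / ε) * (p.2 - dot p.1 x₀) := norm_prod_le_of_forall_mem_closedBall hε hp
    _ = _ := by simp [hdot, mul_comm]

theorem extremeRay_in_or_conical_limit_general {n : ℕ} (Ω : Set ((Fin n → ℝ) × ℝ))
    (h0 : (0 : (Fin n → ℝ) × ℝ) ∉ Ω)
    (hfull : (interior (cutClosure Ω)).Nonempty)
    (r : (Fin n → ℝ) × ℝ) (hr : IsExtremeRay (closure (coneHull Ω)) r) :
    (∃ c : ℝ, 0 < c ∧ c • r ∈ Ω) ∨
      ∃ rs : ℕ → ((Fin n → ℝ) × ℝ), Function.Injective rs ∧ (∀ i, rs i ∈ Ω) ∧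
        ∃ lam : ℕ → ℝ, (∀ i, 0 < lam i) ∧
          Filter.Tendsto (fun i => lam i • rs i) Filter.atTop (nhds r) := by
  obtain ⟨x₀, hx₀⟩ := hfull
  obtain ⟨φ, hφ⟩ := exists_norm_le_of_mem_interior_cutClosure hx₀
  exact hr.exists_smul_mem_or_exists_injective_tendsto hφ h0

/-- Lemma: every extreme ray of cl cone(Ω) is (up to positive scaling) in Ω, or is the
conical limit of a sequence of pairwise distinct points of Ω. -/
theorem extremeRay_in_or_conical_limit {n : ℕ} (Ω : Set ((Fin n → ℝ) × ℝ))
    (hΩ : ((0 : Fin n → ℝ), (1 : ℝ)) ∈ Ω)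
    (h0 : (0 : (Fin n → ℝ) × ℝ) ∉ Ω)
    (hfull : (interior (cutClosure Ω)).Nonempty)
    (r : (Fin n → ℝ) × ℝ) (hr : IsExtremeRay (closure (coneHull Ω)) r) :
    (∃ c : ℝ, 0 < c ∧ c • r ∈ Ω) ∨
      ∃ rs : ℕ → ((Fin n → ℝ) × ℝ), Function.Injective rs ∧ (∀ i, rs i ∈ Ω) ∧
        ∃ lam : ℕ → ℝ, (∀ i, 0 < lam i) ∧
          Filter.Tendsto (fun i => lam i • rs i) Filter.atTop (nhds r) :=
  extremeRay_in_or_conical_limit_general Ω h0 hfull r hr
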